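/- In the setting of the twisted super-Laplacian Δ = Δ̄ + Δ̌ and its dual η = η̄ + η̌ (with Δ̄, η̄ as in the twisted bosonic case with parameters n₁ < n₂ ≤ n, and Δ̌ = Σ_{r=1}^m ∂_{θ_r}∂_{ϑ_r}, η̌ = multiplication by Σ_r θ_r ϑ_r), suppose f satisfies Δ(f) = 0, ♭(f) + Σ_r θ_r∂_{θ_r}(f) = ℓ·f and ♭′(f) + Σ_r ϑ_r∂_{ϑ_r}(f) = ℓ'·f. Then for every positive integer ℓ₁, Δ(η^{ℓ₁} f) = ℓ₁(n₂ − n₁ − m + ℓ + ℓ' + ℓ₁ − 1)·η^{ℓ₁−1} f. -/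

import Mathlib

open TensorProduct MvPolynomial

noncomputable section

variable (n m : ℕ)

/-- bosonic polynomial part -/
abbrev PolyA (n : ℕ) := MvPolynomial (Fin n ⊕ Fin n) ℂ
/-- fermionic exterior part -/
abbrev ExtA (m : ℕ) := ExteriorAlgebra ℂ ((Fin m ⊕ Fin m) → ℂ)
/-- full supersymmetric algebra -/
abbrev SAlg (n m : ℕ) := PolyA n ⊗[ℂ] ExtA m

-- generators
def xv (i : Fin n) : PolyA n := X (Sum.inl i)
def yv (i : Fin n) : PolyA n := X (Sum.inr i)
def θv (r : Fin m) : ExtA m := ExteriorAlgebra.ι ℂ (Pi.single (Sum.inl r) 1)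
def ϑv (r : Fin m) : ExtA m := ExteriorAlgebra.ι ℂ (Pi.single (Sum.inr r) 1)

-- odd superderivations on the exterior part
def dθ (r : Fin m) : Module.End ℂ (ExtA m) :=
  CliffordAlgebra.contractLeft (Q := (0 : QuadraticForm ℂ ((Fin m ⊕ Fin m) → ℂ)))
    (LinearMap.proj (Sum.inl r))
def dϑ (r : Fin m) : Module.End ℂ (ExtA m) :=
  CliffordAlgebra.contractLeft (Q := (0 : QuadraticForm ℂ ((Fin m ⊕ Fin m) → ℂ)))
    (LinearMap.proj (Sum.inr r))

-- operators on the full algebra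
def pdx (i : Fin n) : Module.End ℂ (SAlg n m) :=
  TensorProduct.map ((pderiv (Sum.inl i) : Derivation ℂ (PolyA n) (PolyA n)) : PolyA n →ₗ[ℂ] PolyA n) LinearMap.id
def pdy (i : Fin n) : Module.End ℂ (SAlg n m) :=
  TensorProduct.map ((pderiv (Sum.inr i) : Derivation ℂ (PolyA n) (PolyA n)) : PolyA n →ₗ[ℂ] PolyA n) LinearMap.id
def pdθ (r : Fin m) : Module.End ℂ (SAlg n m) :=
  TensorProduct.map LinearMap.id (dθ m r)
def pdϑ (r : Fin m) : Module.End ℂ (SAlg n m) :=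
  TensorProduct.map LinearMap.id (dϑ m r)

-- multiplication operators
def mx (i : Fin n) : Module.End ℂ (SAlg n m) := LinearMap.mulLeft ℂ (xv n i ⊗ₜ[ℂ] 1)
def mθ (r : Fin m) : Module.End ℂ (SAlg n m) := LinearMap.mulLeft ℂ ((1 : PolyA n) ⊗ₜ[ℂ] θv m r)

def my (i : Fin n) : Module.End ℂ (SAlg n m) := LinearMap.mulLeft ℂ (yv n i ⊗ₜ[ℂ] 1)
def mϑ (r : Fin m) : Module.End ℂ (SAlg n m) := LinearMap.mulLeft ℂ ((1 : PolyA n) ⊗ₜ[ℂ] ϑv m r)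

/-- the element η = Σ_i x_i y_i + Σ_r θ_r ϑ_r of the superalgebra -/
def ηelt : SAlg n m :=
  (∑ i : Fin n, (xv n i * yv n i) ⊗ₜ[ℂ] (1 : ExtA m))
    + ∑ r : Fin m, (1 : PolyA n) ⊗ₜ[ℂ] (θv m r * ϑv m r)

/-- the super-Laplacian Δ = Σ_i ∂_{x_i}∂_{y_i} + Σ_r ∂_{θ_r}∂_{ϑ_r} -/
def ΔS : Module.End ℂ (SAlg n m) :=
  (∑ i : Fin n, pdx n m i ∘ₗ pdy n m i) + ∑ r : Fin m, pdθ n m r ∘ₗ pdϑ n m r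
/-- multiplication by η -/
def ηop : Module.End ℂ (SAlg n m) := LinearMap.mulLeft ℂ (ηelt n m)

variable (n₁ n₂ : ℕ)

/-- the twisted super-Laplacian Δ = Δ̄ + Δ̌ -/
def Δtw : Module.End ℂ (SAlg n m) :=
  (∑ i : Fin n,
    if i.val < n₁ then -(mx n m i ∘ₗ pdy n m i)
    else if i.val < n₂ then pdx n m i ∘ₗ pdy n m i
    else -(my n m i ∘ₗ pdx n m i))
  + ∑ r : Fin m, pdθ n m r ∘ₗ pdϑ n m r

/-- the dual operator η = η̄ + η̌ -/
def ηtw : Module.End ℂ (SAlg n m) :=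
  (∑ i : Fin n,
    if i.val < n₁ then my n m i ∘ₗ pdx n m i
    else if i.val < n₂ then mx n m i ∘ₗ my n m i
    else mx n m i ∘ₗ pdy n m i)
  + ∑ r : Fin m, mθ n m r ∘ₗ mϑ n m r

/-- ♭ + Σ_r θ_r∂_{θ_r} -/
def degtwX : Module.End ℂ (SAlg n m) :=
  (∑ i : Fin n, if i.val < n₁ then -(mx n m i ∘ₗ pdx n m i) else mx n m i ∘ₗ pdx n m i)
  + ∑ r : Fin m, mθ n m r ∘ₗ pdθ n m r

/-- ♭′ + Σ_r ϑ_r∂_{ϑ_r} -/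
def degtwY : Module.End ℂ (SAlg n m) :=
  (∑ i : Fin n, if i.val < n₂ then my n m i ∘ₗ pdy n m i else -(my n m i ∘ₗ pdy n m i))
  + ∑ r : Fin m, mϑ n m r ∘ₗ pdϑ n m r


/-!
Both Δ and η split as `A ⊗ 1 + 1 ⊗ A'`, a bosonic operator on the polynomial factor plus a
fermionic one on the exterior factor, and the cross terms commute. The bosonic operators are sums
over `i` of elements of the Weyl algebra of `x_i, y_i, ∂_{x_i}, ∂_{y_i}`, the fermionic ones sums
over `r` of even elements of the Clifford algebra of `θ_r, ϑ_r, ∂_{θ_r}, ∂_{ϑ_r}`; summands with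
different indices commute. A computation for a single index then gives, with
`H = (♭ + Σ θ∂_θ) + (♭′ + Σ ϑ∂_ϑ)`,

  `[Δ, η] = H + (n₂ - n₁ - m)`,   `[H, η] = 2η`,

where each index `n₁ ≤ i < n₂` contributes `+1` (from `[∂_x ∂_y, x y]`) and each fermionic pair
`-1`. These are `sl₂`-relations, and `f` is a lowest-weight vector of weight `ℓ + ℓ'`, so the
formula follows by induction on the power of η.
-/

section RingIdentities

variable {R : Type*} [Ring R]

theorem sum_mul_sum_eq_add_sum_commutator {ι : Type*} [Fintype ι] (A B : ι → R)
    (hoff : ∀ i j, i ≠ j → Commute (A i) (B j)) :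
    (∑ i, A i) * (∑ j, B j) = (∑ j, B j) * (∑ i, A i) + ∑ i, (A i * B i - B i * A i) := by
  classical
  rw [Finset.sum_mul_sum, Finset.sum_mul_sum, Finset.sum_comm (f := fun j i => B j * A i),
    ← sub_eq_iff_eq_add', ← Finset.sum_sub_distrib]
  refine Finset.sum_congr rfl fun i _ => ?_
  rw [← Finset.sum_sub_distrib, Finset.sum_eq_single i
    (fun j _ hji => sub_eq_zero.2 (hoff i j hji.symm).eq) (by simp)]

theorem commute_mul_mul_of_anticommute {a b c d : R} (hac : a * c = -(c * a))
    (had : a * d = -(d * a)) (hbc : b * c = -(c * b)) (hbd : b * d = -(d * b)) :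
    Commute (a * b) (c * d) := by
  have key : ∀ {x : R}, x * c = -(c * x) → x * d = -(d * x) → Commute x (c * d) :=
    fun hc hd => by
      change _ = _
      linear_combination (norm := noncomm_ring) hc * d - c * hd
  exact (key hac had).mul_left (key hbc hbd)

/- In the three `weyl_identities_*` lemmas, `a, b, p, q` stand for `x_i, y_i, ∂_{x_i}, ∂_{y_i}`. -/

theorem weyl_identities_lower {a b p q : R} (hpa : p * a = a * p + 1) (hqb : q * b = b * q + 1)
    (hpb : p * b = b * p) (hba : b * a = a * b) (hqp : q * p = p * q) :
    -(a * q) * (b * p) = b * p * -(a * q) + (-(a * p) + b * q) ∧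
    -(a * p) * (b * p) = b * p * -(a * p) + b * p ∧
    b * q * (b * p) = b * p * (b * q) + b * p := by
  refine ⟨?_, ?_, ?_⟩
  · linear_combination (norm := noncomm_ring)
      b * hpa * q - a * hqb * p - a * b * hqp + hba * p * q
  · linear_combination (norm := noncomm_ring) b * hpa * p - a * hpb * p + hba * p * p
  · linear_combination (norm := noncomm_ring) b * hqb * p - b * hpb * q + b * b * hqp

theorem weyl_identities_middle {a b p q : R} (hpa : p * a = a * p + 1) (hqb : q * b = b * q + 1)
    (hpb : p * b = b * p) (hqa : q * a = a * q) (hba : b * a = a * b) :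
    p * q * (a * b) = a * b * (p * q) + (a * p + b * q + 1) ∧
    a * p * (a * b) = a * b * (a * p) + a * b ∧
    b * q * (a * b) = a * b * (b * q) + a * b := by
  refine ⟨?_, ?_, ?_⟩
  · linear_combination (norm := noncomm_ring)
      p * hqa * b + hpa * q * b + a * p * hqb + hqb + a * hpb * q
  · linear_combination (norm := noncomm_ring) a * hpa * b - a * hba * p + a * a * hpb
  · linear_combination (norm := noncomm_ring) b * hqa * b + hba * q * b + a * b * hqb

theorem weyl_identities_upper {a b p q : R} (hpa : p * a = a * p + 1) (hqb : q * b = b * q + 1)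
    (hqa : q * a = a * q) (hba : b * a = a * b) (hqp : q * p = p * q) :
    -(b * p) * (a * q) = a * q * -(b * p) + (a * p + -(b * q)) ∧
    a * p * (a * q) = a * q * (a * p) + a * q ∧
    -(b * q) * (a * q) = a * q * -(b * q) + a * q := by
  refine ⟨?_, ?_, ?_⟩
  · linear_combination (norm := noncomm_ring)
      a * hqb * p - b * hpa * q - hba * p * q + a * b * hqp
  · linear_combination (norm := noncomm_ring) a * hpa * q - a * hqa * p - a * a * hqp
  · linear_combination (norm := noncomm_ring) a * hqb * q - b * hqa * q - hba * q * q

/- Here `e, f, c, d` stand for `θ_r, ϑ_r, ∂_{θ_r}, ∂_{ϑ_r}`. -/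
theorem clifford_identities {e f c d : R} (hce : c * e = 1 - e * c) (hdf : d * f = 1 - f * d)
    (hcf : c * f = -(f * c)) (hde : d * e = -(e * d)) (hfe : f * e = -(e * f))
    (hee : e * e = 0) (hff : f * f = 0) :
    c * d * (e * f) = e * f * (c * d) + (e * c + f * d - 1) ∧
    (e * c + f * d) * (e * f) = e * f * (e * c + f * d) + 2 • (e * f) := by
  refine ⟨?_, ?_⟩
  · linear_combination (norm := noncomm_ring)
      c * hde * f - hce * d * f - hdf + e * c * hdf - e * hcf * d
  · linear_combination (norm := noncomm_ring)
      e * hce * f - e * hfe * c - hee * c * f + hee * f * c + f * hde * f - 2 * e * hff * d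
        - hfe * d * f + e * f * hdf

end RingIdentities

section Ladder

variable {R M : Type*} [CommRing R] [AddCommGroup M] [Module R M]
  {D E H : Module.End R M} {c μ : R} {v : M}

theorem apply_pow_apply_of_mul_eq (hHE : H * E = E * H + (2 : R) • E) (hHv : H v = μ • v)
    (k : ℕ) : H ((E ^ k) v) = (μ + 2 * k) • (E ^ k) v := by
  induction k with
  | zero => simpa using hHv
  | succ k ih =>
    rw [pow_succ', Module.End.mul_apply, ← Module.End.mul_apply H, hHE]
    simp only [LinearMap.add_apply, Module.End.mul_apply, LinearMap.smul_apply, ih, map_smul]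
    push_cast
    module

theorem apply_pow_succ_apply_of_mul_eq (hDE : D * E = E * D + H + c • 1)
    (hHE : H * E = E * H + (2 : R) • E) (hDv : D v = 0) (hHv : H v = μ • v) (k : ℕ) :
    D ((E ^ (k + 1)) v) = ((k + 1) * (c + μ + k)) • (E ^ k) v := by
  have step (j : ℕ) :
      D ((E ^ (j + 1)) v) = E (D ((E ^ j) v)) + (μ + 2 * j + c) • (E ^ j) v := by
    rw [pow_succ', Module.End.mul_apply, ← Module.End.mul_apply D, hDE]
    simp only [LinearMap.add_apply, Module.End.mul_apply, LinearMap.smul_apply,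
      Module.End.one_apply, apply_pow_apply_of_mul_eq hHE hHv]
    module
  induction k with
  | zero =>
    rw [step, pow_zero, Module.End.one_apply, hDv, map_zero]
    push_cast
    module
  | succ k ih =>
    rw [step, ih, map_smul, ← Module.End.mul_apply, ← pow_succ']
    push_cast
    module

end Ladder

section TensorProduct

variable {R M N : Type*} [CommSemiring R] [AddCommMonoid M] [Module R M] [AddCommMonoid N]
  [Module R N]

theorem commute_rTensor_lTensor (f : Module.End R M) (g : Module.End R N) :
    Commute (f.rTensor N) (g.lTensor M) := by
  change _ * _ = _ * _
  rw [Module.End.mul_eq_comp, Module.End.mul_eq_comp, LinearMap.rTensor_comp_lTensor,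
    LinearMap.lTensor_comp_rTensor]

theorem rTensor_add_lTensor_mul_eq {A B C : Module.End R M} {A' B' C' : Module.End R N}
    (h : A * B = B * A + C) (h' : A' * B' = B' * A' + C') :
    (A.rTensor N + A'.lTensor M) * (B.rTensor N + B'.lTensor M)
      = (B.rTensor N + B'.lTensor M) * (A.rTensor N + A'.lTensor M)
        + (C.rTensor N + C'.lTensor M) := by
  simp only [add_mul, mul_add, ← LinearMap.rTensor_mul, ← LinearMap.lTensor_mul, h, h',
    LinearMap.rTensor_add, LinearMap.lTensor_add, (commute_rTensor_lTensor A B').eq,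
    ← (commute_rTensor_lTensor B A').eq]
  abel

theorem rTensor_sum {ι P : Type*} [AddCommMonoid P] [Module R P] (s : Finset ι)
    (f : ι → M →ₗ[R] P) : (∑ i ∈ s, f i).rTensor N = ∑ i ∈ s, (f i).rTensor N :=
  map_sum (LinearMap.rTensorHom N) f s

theorem lTensor_sum {ι P : Type*} [AddCommMonoid P] [Module R P] (s : Finset ι)
    (f : ι → N →ₗ[R] P) : (∑ i ∈ s, f i).lTensor M = ∑ i ∈ s, (f i).lTensor M :=
  map_sum (LinearMap.lTensorHom M) f s

theorem mulLeft_tmul_one {A B : Type*} [Semiring A] [Algebra R A] [Semiring B] [Algebra R B]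
    (a : A) : LinearMap.mulLeft R (a ⊗ₜ[R] (1 : B)) = (LinearMap.mulLeft R a).rTensor B := by
  ext
  simp

theorem mulLeft_one_tmul {A B : Type*} [Semiring A] [Algebra R A] [Semiring B] [Algebra R B]
    (b : B) : LinearMap.mulLeft R ((1 : A) ⊗ₜ[R] b) = (LinearMap.mulLeft R b).lTensor A := by
  ext
  simp

end TensorProduct

section Bosonic

variable {n}

def pd (u : Fin n ⊕ Fin n) : Module.End ℂ (PolyA n) :=
  (pderiv u : Derivation ℂ (PolyA n) (PolyA n))

def mulX (u : Fin n ⊕ Fin n) : Module.End ℂ (PolyA n) := LinearMap.mulLeft ℂ (X u)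

theorem pd_mul_mulX (u v : Fin n ⊕ Fin n) :
    pd u * mulX v = mulX v * pd u + if u = v then 1 else 0 := by
  refine LinearMap.ext fun p => ?_
  simp only [pd, mulX, Module.End.mul_apply, LinearMap.mulLeft_apply, LinearMap.add_apply,
    Derivation.coeFn_coe, Derivation.leibniz, pderiv_X, smul_eq_mul]
  split_ifs with h <;> simp [h, add_comm]

theorem commute_pd_mulX {u v : Fin n ⊕ Fin n} (h : u ≠ v) : Commute (pd u) (mulX v) := by
  have := pd_mul_mulX u v
  rwa [if_neg h, add_zero] at this

/- The commutator of two derivations is a derivation; this one kills every `X w`. -/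
theorem commute_pd_pd (u v : Fin n ⊕ Fin n) : Commute (pd u) (pd v) := by
  have : ⁅(pderiv u : Derivation ℂ (PolyA n) (PolyA n)), pderiv v⁆ = 0 :=
    derivation_ext fun w => by
      rw [Derivation.commutator_apply]
      simp [pderiv_X, Pi.single_apply, apply_ite]
  refine LinearMap.ext fun p => ?_
  simpa [pd, Derivation.commutator_apply, sub_eq_zero] using congrArg (· p) this

theorem commute_mulX_mulX (u v : Fin n ⊕ Fin n) : Commute (mulX u) (mulX v) :=
  LinearMap.ext fun p => by simp [mulX, mul_left_comm]

theorem weyl_relations (i : Fin n) :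
    pd (.inl i) * mulX (.inl i) = mulX (.inl i) * pd (.inl i) + 1 ∧
    pd (.inr i) * mulX (.inr i) = mulX (.inr i) * pd (.inr i) + 1 ∧
    pd (.inl i) * mulX (.inr i) = mulX (.inr i) * pd (.inl i) ∧
    pd (.inr i) * mulX (.inl i) = mulX (.inl i) * pd (.inr i) ∧
    mulX (.inr i) * mulX (.inl i) = mulX (.inl i) * mulX (.inr i) ∧
    pd (.inr i) * pd (.inl i) = pd (.inl i) * pd (.inr i) :=
  ⟨by simpa using pd_mul_mulX (.inl i) (.inl i), by simpa using pd_mul_mulX (.inr i) (.inr i),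
    commute_pd_mulX (by simp), commute_pd_mulX (by simp), commute_mulX_mulX _ _,
    commute_pd_pd _ _⟩

def varOps (i : Fin n) : Subalgebra ℂ (Module.End ℂ (PolyA n)) :=
  Algebra.adjoin ℂ {T | ∃ u, Sum.elim id id u = i ∧ (T = pd u ∨ T = mulX u)}

theorem commute_of_mem_varOps {i j : Fin n} (hij : i ≠ j) {S T : Module.End ℂ (PolyA n)}
    (hS : S ∈ varOps i) (hT : T ∈ varOps j) : Commute S T := by
  refine Algebra.commute_of_mem_adjoin_of_forall_mem_commute hT ?_
  rintro _ ⟨v, rfl, rfl | rfl⟩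
  all_goals
    refine (Algebra.commute_of_mem_adjoin_of_forall_mem_commute hS ?_).symm
    rintro _ ⟨u, rfl, rfl | rfl⟩
  all_goals have huv : v ≠ u := fun h => hij (h ▸ rfl)
  · exact commute_pd_pd v u
  · exact commute_pd_mulX huv
  · exact (commute_pd_mulX huv.symm).symm
  · exact commute_mulX_mulX v u

def ΔbarAt (i : Fin n) : Module.End ℂ (PolyA n) :=
  if i.val < n₁ then -(mulX (.inl i) * pd (.inr i))
  else if i.val < n₂ then pd (.inl i) * pd (.inr i)
  else -(mulX (.inr i) * pd (.inl i))

def ηbarAt (i : Fin n) : Module.End ℂ (PolyA n) :=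
  if i.val < n₁ then mulX (.inr i) * pd (.inl i)
  else if i.val < n₂ then mulX (.inl i) * mulX (.inr i)
  else mulX (.inl i) * pd (.inr i)

def flatAt (i : Fin n) : Module.End ℂ (PolyA n) :=
  if i.val < n₁ then -(mulX (.inl i) * pd (.inl i)) else mulX (.inl i) * pd (.inl i)

def flat'At (i : Fin n) : Module.End ℂ (PolyA n) :=
  if i.val < n₂ then mulX (.inr i) * pd (.inr i) else -(mulX (.inr i) * pd (.inr i))

theorem ΔbarAt_mem_varOps (i : Fin n) : ΔbarAt n₁ n₂ i ∈ varOps i := by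
  unfold ΔbarAt
  split_ifs <;> (try rw [neg_mem_iff]) <;>
    exact mul_mem (Algebra.subset_adjoin (by simp)) (Algebra.subset_adjoin (by simp))

theorem ηbarAt_mem_varOps (i : Fin n) : ηbarAt n₁ n₂ i ∈ varOps i := by
  unfold ηbarAt
  split_ifs <;>
    exact mul_mem (Algebra.subset_adjoin (by simp)) (Algebra.subset_adjoin (by simp))

theorem flatAt_mem_varOps (i : Fin n) : flatAt n₁ i ∈ varOps i := by
  unfold flatAt
  split_ifs <;> (try rw [neg_mem_iff]) <;>
    exact mul_mem (Algebra.subset_adjoin (by simp)) (Algebra.subset_adjoin (by simp))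

theorem flat'At_mem_varOps (i : Fin n) : flat'At n₂ i ∈ varOps i := by
  unfold flat'At
  split_ifs <;> (try rw [neg_mem_iff]) <;>
    exact mul_mem (Algebra.subset_adjoin (by simp)) (Algebra.subset_adjoin (by simp))

theorem ηbarAt_commutators (h₁₂ : n₁ ≤ n₂) (i : Fin n) :
    ΔbarAt n₁ n₂ i * ηbarAt n₁ n₂ i = ηbarAt n₁ n₂ i * ΔbarAt n₁ n₂ i
      + (flatAt n₁ i + flat'At n₂ i + if n₁ ≤ i.val ∧ i.val < n₂ then 1 else 0) ∧
    flatAt n₁ i * ηbarAt n₁ n₂ i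
      = ηbarAt n₁ n₂ i * flatAt n₁ i + ηbarAt n₁ n₂ i ∧
    flat'At n₂ i * ηbarAt n₁ n₂ i
      = ηbarAt n₁ n₂ i * flat'At n₂ i + ηbarAt n₁ n₂ i := by
  obtain ⟨hpa, hqb, hpb, hqa, hba, hqp⟩ := weyl_relations i
  unfold ΔbarAt ηbarAt flatAt flat'At
  obtain h₁ | ⟨h₁, h₂⟩ | h₂ : i.val < n₁ ∨ (n₁ ≤ i.val ∧ i.val < n₂) ∨ n₂ ≤ i.val := by
    omega
  · simp only [h₁, h₁.trans_le h₁₂, not_le.2 h₁, false_and, if_true, if_false, add_zero]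
    exact weyl_identities_lower hpa hqb hpb hba hqp
  · simp only [h₁, h₂, not_lt.2 h₁, and_self, if_true, if_false]
    exact weyl_identities_middle hpa hqb hpb hqa hba
  · simp only [not_lt.2 h₂, not_lt.2 (h₁₂.trans h₂), and_false, if_false, add_zero]
    exact weyl_identities_upper hpa hqb hqa hba hqp

variable (n)

def Δbar : Module.End ℂ (PolyA n) := ∑ i, ΔbarAt n₁ n₂ i
def ηbar : Module.End ℂ (PolyA n) := ∑ i, ηbarAt n₁ n₂ i
def flat : Module.End ℂ (PolyA n) := ∑ i, flatAt n₁ i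
def flat' : Module.End ℂ (PolyA n) := ∑ i, flat'At n₂ i

theorem card_filter_fin_mem_Ico (h : n₂ ≤ n) :
    (Finset.univ.filter fun i : Fin n => n₁ ≤ i.val ∧ i.val < n₂).card = n₂ - n₁ := by
  rw [← Nat.card_Ico, ← Finset.card_map Fin.valEmbedding]
  congr 1
  ext k
  simp only [Finset.mem_map, Finset.mem_filter, Finset.mem_univ, true_and,
    Fin.valEmbedding_apply, Finset.mem_Ico]
  exact ⟨by rintro ⟨i, hi, rfl⟩; exact hi, fun hk => ⟨⟨k, by omega⟩, hk, rfl⟩⟩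

theorem Δbar_mul_ηbar (h₁₂ : n₁ ≤ n₂) (h₂ : n₂ ≤ n) :
    Δbar n n₁ n₂ * ηbar n n₁ n₂
      = ηbar n n₁ n₂ * Δbar n n₁ n₂
        + (flat n n₁ + flat' n n₂ + ((n₂ : ℂ) - n₁) • 1) := by
  rw [Δbar, ηbar, sum_mul_sum_eq_add_sum_commutator _ _ fun i j hij =>
    commute_of_mem_varOps hij (ΔbarAt_mem_varOps n₁ n₂ i) (ηbarAt_mem_varOps n₁ n₂ j)]
  congr 1
  simp only [fun i => sub_eq_iff_eq_add'.2 (ηbarAt_commutators n₁ n₂ h₁₂ i).1,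
    Finset.sum_add_distrib, Finset.sum_boole, card_filter_fin_mem_Ico n n₁ n₂ h₂]
  rw [flat, flat', ← Nat.cast_sub h₁₂, Nat.cast_smul_eq_nsmul, nsmul_one]

theorem flat_add_flat'_mul_ηbar (h₁₂ : n₁ ≤ n₂) :
    (flat n n₁ + flat' n n₂) * ηbar n n₁ n₂
      = ηbar n n₁ n₂ * (flat n n₁ + flat' n n₂) + (2 : ℂ) • ηbar n n₁ n₂ := by
  rw [flat, flat', ηbar, ← Finset.sum_add_distrib, sum_mul_sum_eq_add_sum_commutator _ _
    fun i j hij => commute_of_mem_varOps hij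
      (add_mem (flatAt_mem_varOps n₁ i) (flat'At_mem_varOps n₂ i))
      (ηbarAt_mem_varOps n₁ n₂ j),
    Finset.smul_sum]
  congr 1
  refine Finset.sum_congr rfl fun i _ => ?_
  obtain ⟨-, hflat, hflat'⟩ := ηbarAt_commutators n₁ n₂ h₁₂ i
  rw [add_mul, mul_add, hflat, hflat', two_smul]
  abel

end Bosonic

section Fermionic

variable {m}

def contr (w : Fin m ⊕ Fin m) : Module.End ℂ (ExtA m) :=
  CliffordAlgebra.contractLeft (Q := (0 : QuadraticForm ℂ ((Fin m ⊕ Fin m) → ℂ)))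
    (LinearMap.proj w)

def mulι (w : Fin m ⊕ Fin m) : Module.End ℂ (ExtA m) :=
  LinearMap.mulLeft ℂ (ExteriorAlgebra.ι ℂ (Pi.single w 1))

theorem contr_mul_mulι (w w' : Fin m ⊕ Fin m) :
    contr w * mulι w' = (if w = w' then 1 else 0) - mulι w' * contr w := by
  refine LinearMap.ext fun x => ?_
  simp only [contr, mulι, Module.End.mul_apply, LinearMap.mulLeft_apply, LinearMap.sub_apply]
  rw [CliffordAlgebra.contractLeft_ι_mul]
  split_ifs with h
  · subst h
    simp
  · simp [h]

theorem contr_mul_contr (w w' : Fin m ⊕ Fin m) : contr w * contr w' = -(contr w' * contr w) :=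
  LinearMap.ext fun _ => CliffordAlgebra.contractLeft_comm _ _ _

theorem mulι_mul_mulι (w w' : Fin m ⊕ Fin m) : mulι w * mulι w' = -(mulι w' * mulι w) :=
  LinearMap.ext fun x => by
    simp only [mulι, Module.End.mul_apply, LinearMap.mulLeft_apply, LinearMap.neg_apply,
      ← mul_assoc, ← neg_mul,
      ← eq_neg_iff_add_eq_zero.2 (ExteriorAlgebra.ι_add_mul_swap _ _)]

theorem mulι_mul_self (w : Fin m ⊕ Fin m) : mulι w * mulι w = 0 :=
  LinearMap.ext fun x => by simp [mulι, ← mul_assoc]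

def fermionGens (r : Fin m) : Set (Module.End ℂ (ExtA m)) :=
  {T | ∃ w, Sum.elim id id w = r ∧ (T = contr w ∨ T = mulι w)}

theorem anticommute_of_mem_fermionGens {r s : Fin m} (hrs : r ≠ s)
    {S T : Module.End ℂ (ExtA m)} (hS : S ∈ fermionGens r) (hT : T ∈ fermionGens s) :
    S * T = -(T * S) := by
  obtain ⟨w, rfl, rfl | rfl⟩ := hS <;> obtain ⟨w', rfl, rfl | rfl⟩ := hT <;>
    have hww' : w ≠ w' := fun h => hrs (h ▸ rfl)
  · exact contr_mul_contr w w'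
  · rw [contr_mul_mulι, if_neg hww', zero_sub]
  · rw [contr_mul_mulι, if_neg hww'.symm, zero_sub, neg_neg]
  · exact mulι_mul_mulι w w'

theorem commute_mul_mul_of_mem_fermionGens {r s : Fin m} (hrs : r ≠ s)
    {S₁ S₂ T₁ T₂ : Module.End ℂ (ExtA m)}
    (hS₁ : S₁ ∈ fermionGens r := by simp [fermionGens])
    (hS₂ : S₂ ∈ fermionGens r := by simp [fermionGens])
    (hT₁ : T₁ ∈ fermionGens s := by simp [fermionGens])
    (hT₂ : T₂ ∈ fermionGens s := by simp [fermionGens]) :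
    Commute (S₁ * S₂) (T₁ * T₂) :=
  commute_mul_mul_of_anticommute (anticommute_of_mem_fermionGens hrs hS₁ hT₁)
    (anticommute_of_mem_fermionGens hrs hS₁ hT₂)
    (anticommute_of_mem_fermionGens hrs hS₂ hT₁)
    (anticommute_of_mem_fermionGens hrs hS₂ hT₂)

theorem clifford_identities_at (r : Fin m) :
    contr (.inl r) * contr (.inr r) * (mulι (.inl r) * mulι (.inr r))
      = mulι (.inl r) * mulι (.inr r) * (contr (.inl r) * contr (.inr r))
        + (mulι (.inl r) * contr (.inl r) + mulι (.inr r) * contr (.inr r) - 1) ∧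
    (mulι (.inl r) * contr (.inl r) + mulι (.inr r) * contr (.inr r))
        * (mulι (.inl r) * mulι (.inr r))
      = mulι (.inl r) * mulι (.inr r)
          * (mulι (.inl r) * contr (.inl r) + mulι (.inr r) * contr (.inr r))
        + 2 • (mulι (.inl r) * mulι (.inr r)) :=
  clifford_identities (by simpa using contr_mul_mulι (.inl r) (.inl r))
    (by simpa using contr_mul_mulι (.inr r) (.inr r))
    (by simpa using contr_mul_mulι (.inl r) (.inr r))
    (by simpa using contr_mul_mulι (.inr r) (.inl r))
    (mulι_mul_mulι _ _) (mulι_mul_self _) (mulι_mul_self _)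

variable (m)

def Δcheck : Module.End ℂ (ExtA m) := ∑ r, contr (.inl r) * contr (.inr r)
def ηcheck : Module.End ℂ (ExtA m) := ∑ r, mulι (.inl r) * mulι (.inr r)
def eulerθ : Module.End ℂ (ExtA m) := ∑ r, mulι (.inl r) * contr (.inl r)
def eulerϑ : Module.End ℂ (ExtA m) := ∑ r, mulι (.inr r) * contr (.inr r)

theorem Δcheck_mul_ηcheck :
    Δcheck m * ηcheck m = ηcheck m * Δcheck m + (eulerθ m + eulerϑ m - (m : ℂ) • 1) := by
  rw [Δcheck, ηcheck, sum_mul_sum_eq_add_sum_commutator _ _ fun r s hrs =>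
    commute_mul_mul_of_mem_fermionGens hrs]
  congr 1
  simp only [fun r => sub_eq_iff_eq_add'.2 (clifford_identities_at r).1,
    Finset.sum_sub_distrib, Finset.sum_add_distrib, Finset.sum_const, Finset.card_univ,
    Fintype.card_fin]
  rw [eulerθ, eulerϑ, Nat.cast_smul_eq_nsmul]

theorem eulerθ_add_eulerϑ_mul_ηcheck :
    (eulerθ m + eulerϑ m) * ηcheck m
      = ηcheck m * (eulerθ m + eulerϑ m) + (2 : ℂ) • ηcheck m := by
  rw [eulerθ, eulerϑ, ηcheck, ← Finset.sum_add_distrib, sum_mul_sum_eq_add_sum_commutator _ _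
    fun r s hrs => .add_left (commute_mul_mul_of_mem_fermionGens hrs)
      (commute_mul_mul_of_mem_fermionGens hrs), Finset.smul_sum]
  congr 1
  refine Finset.sum_congr rfl fun r _ => ?_
  rw [sub_eq_iff_eq_add', (clifford_identities_at r).2, two_smul, two_smul]

end Fermionic

section Superalgebra

theorem pdx_eq_rTensor (i : Fin n) : pdx n m i = (pd (.inl i)).rTensor (ExtA m) := rfl
theorem pdy_eq_rTensor (i : Fin n) : pdy n m i = (pd (.inr i)).rTensor (ExtA m) := rfl
theorem mx_eq_rTensor (i : Fin n) : mx n m i = (mulX (.inl i)).rTensor (ExtA m) :=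
  mulLeft_tmul_one _
theorem my_eq_rTensor (i : Fin n) : my n m i = (mulX (.inr i)).rTensor (ExtA m) :=
  mulLeft_tmul_one _
theorem pdθ_eq_lTensor (r : Fin m) : pdθ n m r = (contr (.inl r)).lTensor (PolyA n) := rfl
theorem pdϑ_eq_lTensor (r : Fin m) : pdϑ n m r = (contr (.inr r)).lTensor (PolyA n) := rfl
theorem mθ_eq_lTensor (r : Fin m) : mθ n m r = (mulι (.inl r)).lTensor (PolyA n) :=
  mulLeft_one_tmul _
theorem mϑ_eq_lTensor (r : Fin m) : mϑ n m r = (mulι (.inr r)).lTensor (PolyA n) :=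
  mulLeft_one_tmul _

theorem Δtw_eq :
    Δtw n m n₁ n₂ = (Δbar n n₁ n₂).rTensor (ExtA m) + (Δcheck m).lTensor (PolyA n) := by
  simp only [Δtw, Δbar, ΔbarAt, Δcheck, rTensor_sum, lTensor_sum,
    apply_ite (LinearMap.rTensor (ExtA m)), LinearMap.rTensor_neg, LinearMap.rTensor_mul,
    LinearMap.lTensor_mul, pdx_eq_rTensor, pdy_eq_rTensor, mx_eq_rTensor, my_eq_rTensor,
    pdθ_eq_lTensor, pdϑ_eq_lTensor, ← Module.End.mul_eq_comp]

theorem ηtw_eq :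
    ηtw n m n₁ n₂ = (ηbar n n₁ n₂).rTensor (ExtA m) + (ηcheck m).lTensor (PolyA n) := by
  simp only [ηtw, ηbar, ηbarAt, ηcheck, rTensor_sum, lTensor_sum,
    apply_ite (LinearMap.rTensor (ExtA m)), LinearMap.rTensor_mul, LinearMap.lTensor_mul,
    pdx_eq_rTensor, pdy_eq_rTensor, mx_eq_rTensor, my_eq_rTensor, mθ_eq_lTensor, mϑ_eq_lTensor,
    ← Module.End.mul_eq_comp]

theorem degtwX_eq :
    degtwX n m n₁ = (flat n n₁).rTensor (ExtA m) + (eulerθ m).lTensor (PolyA n) := by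
  simp only [degtwX, flat, flatAt, eulerθ, rTensor_sum, lTensor_sum,
    apply_ite (LinearMap.rTensor (ExtA m)), LinearMap.rTensor_neg, LinearMap.rTensor_mul,
    LinearMap.lTensor_mul, pdx_eq_rTensor, mx_eq_rTensor, pdθ_eq_lTensor, mθ_eq_lTensor,
    ← Module.End.mul_eq_comp]

theorem degtwY_eq :
    degtwY n m n₂ = (flat' n n₂).rTensor (ExtA m) + (eulerϑ m).lTensor (PolyA n) := by
  simp only [degtwY, flat', flat'At, eulerϑ, rTensor_sum, lTensor_sum,
    apply_ite (LinearMap.rTensor (ExtA m)), LinearMap.rTensor_neg, LinearMap.rTensor_mul,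
    LinearMap.lTensor_mul, pdy_eq_rTensor, my_eq_rTensor, pdϑ_eq_lTensor, mϑ_eq_lTensor,
    ← Module.End.mul_eq_comp]

theorem Δtw_mul_ηtw (h₁₂ : n₁ ≤ n₂) (h₂ : n₂ ≤ n) :
    Δtw n m n₁ n₂ * ηtw n m n₁ n₂ = ηtw n m n₁ n₂ * Δtw n m n₁ n₂
      + (degtwX n m n₁ + degtwY n m n₂) + ((n₂ : ℂ) - n₁ - m) • 1 := by
  rw [Δtw_eq, ηtw_eq, degtwX_eq, degtwY_eq,
    rTensor_add_lTensor_mul_eq (Δbar_mul_ηbar n n₁ n₂ h₁₂ h₂) (Δcheck_mul_ηcheck m)]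
  simp only [LinearMap.rTensor_add, LinearMap.lTensor_add, LinearMap.lTensor_sub,
    LinearMap.rTensor_smul, LinearMap.lTensor_smul, Module.End.one_eq_id, LinearMap.rTensor_id,
    LinearMap.lTensor_id]
  module

theorem degtwX_add_degtwY_mul_ηtw (h₁₂ : n₁ ≤ n₂) :
    (degtwX n m n₁ + degtwY n m n₂) * ηtw n m n₁ n₂
      = ηtw n m n₁ n₂ * (degtwX n m n₁ + degtwY n m n₂)
        + (2 : ℂ) • ηtw n m n₁ n₂ := by
  have hdeg : degtwX n m n₁ + degtwY n m n₂
      = (flat n n₁ + flat' n n₂).rTensor (ExtA m)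
        + (eulerθ m + eulerϑ m).lTensor (PolyA n) := by
    rw [degtwX_eq, degtwY_eq, LinearMap.rTensor_add, LinearMap.lTensor_add]
    abel
  rw [hdeg, ηtw_eq, rTensor_add_lTensor_mul_eq (flat_add_flat'_mul_ηbar n n₁ n₂ h₁₂)
    (eulerθ_add_eulerϑ_mul_ηcheck m), LinearMap.rTensor_smul, LinearMap.lTensor_smul, smul_add]

end Superalgebra

theorem twisted_delta_eta_pow (h₂ : n₁ + 1 < n₂) (h₃ : n₂ ≤ n)
    (f : SAlg n m) (ℓ ℓ' : ℤ)
    (hf : Δtw n m n₁ n₂ f = 0)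
    (hX : degtwX n m n₁ f = (ℓ : ℂ) • f)
    (hY : degtwY n m n₂ f = (ℓ' : ℂ) • f) :
    ∀ ℓ₁ : ℕ, 1 ≤ ℓ₁ →
      Δtw n m n₁ n₂ ((ηtw n m n₁ n₂ ^ ℓ₁) f)
        = ((ℓ₁ : ℂ) * ((n₂ : ℂ) - n₁ - m + ℓ + ℓ' + ℓ₁ - 1))
            • (ηtw n m n₁ n₂ ^ (ℓ₁ - 1)) f := by
  intro ℓ₁ hℓ₁
  obtain ⟨k, rfl⟩ := Nat.exists_eq_add_of_le' hℓ₁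
  have h₁₂ : n₁ ≤ n₂ := by omega
  have hdeg : (degtwX n m n₁ + degtwY n m n₂) f = ((ℓ : ℂ) + ℓ') • f := by
    rw [LinearMap.add_apply, hX, hY, add_smul]
  rw [Nat.add_sub_cancel, apply_pow_succ_apply_of_mul_eq (Δtw_mul_ηtw n m n₁ n₂ h₁₂ h₃)
    (degtwX_add_degtwY_mul_ηtw n m n₁ n₂ h₁₂) hf hdeg]
  congr 1
  push_cast
  ring
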